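/- arXiv:1805.00658 — 4 statements merged into one kernel-verified Lean document; each statement's English description precedes it below -/
import Mathlib

section
/- Let {A^t}_{t≥0} be a sequence of column stochastic N×N matrices such that every nonzero entry of each A^t is at least θ ∈ (0,1), every diagonal entry of each A^t is positive, and the sequence of induced digraphs {G^t} (where G^t has an edge (j,i) iff (A^t)_{ij} > 0) is T-strongly connected for some integer T > 0. Let φ^0 ∈ ℝ^N have positive entries with Σ_{i=1}^N φ_i^0 = 1, and let x_i^0 ∈ ℝ^d for each i. Define recursively φ^{t+1} = A^t φ^t and x_i^{t+1} = (1/φ_i^{t+1}) Σ_{j=1}^N (A^t)_{ij} φ_j^t x_j^t (all entries φ_i^t are positive for all t, so these updates are well defined). Then for every i ∈ {1,...,N}, lim_{t→∞} ‖x_i^t − Σ_{k=1}^N φ_k^0 x_k^0‖ = 0. -/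
/-!
Write `transition A s k = A^{s+k-1} ⋯ A^s`. Positive diagonals keep positive entries positive, and
`T`-strong connectivity makes the set of nodes reached from a node grow in every window of `T`
steps until it is everything, so all entries of `transition A s (N T)` are at least `η = θ^{NT}`.
A column-stochastic matrix with all entries `≥ η` contracts the `ℓ¹` distance between any two
columns by the factor `1 - N η` (Dobrushin), hence the rows of `transition A 0 t` become constant
geometrically fast. Since `φ^t = transition A 0 t φ^0` and
`φ_i^t x_i^t = ∑_j (transition A 0 t)_{ij} φ_j^0 x_j^0`, the vector
`φ_i^t (x_i^t - ∑_k φ_k^0 x_k^0)` is a fixed combination of the differences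
`(transition A 0 t)_{ij} - (transition A 0 t)_{ik}` and tends to `0`, while `φ_i^t ≥ η` for
`t ≥ N T`.
-/

open Finset Matrix Filter Topology

theorem Relation.ReflTransGen.exists_rel_of_mem_of_notMem {α : Type*} {r : α → α → Prop}
    {S : Set α} {a b : α} (h : Relation.ReflTransGen r a b) (ha : a ∈ S) (hb : b ∉ S) :
    ∃ u ∈ S, ∃ v ∉ S, r u v := by
  by_contra! hS
  induction h with
  | refl => exact hb ha
  | tail _ hr ih => exact ih fun hbS => hS _ hbS _ hb hr

theorem Finset.eq_univ_of_ssubset_succ {α : Type*} [Fintype α] (S : ℕ → Finset α)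
    (hmono : ∀ k, S k ⊆ S (k + 1)) (hgrow : ∀ k, S k ≠ univ → S k ⊂ S (k + 1)) :
    S (Fintype.card α) = univ := by
  have hcard : ∀ k, S k = univ ∨ k ≤ #(S k) := by
    intro k
    induction k with
    | zero => exact Or.inr (Nat.zero_le _)
    | succ k ih =>
      by_cases hk : S k = univ
      · exact Or.inl (univ_subset_iff.1 (hk ▸ hmono k))
      · exact Or.inr (ih.resolve_left hk |>.trans_lt (card_lt_card (hgrow k hk)))
  exact (hcard _).elim id fun h => eq_univ_of_card _ (le_antisymm (card_le_univ _) h)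

theorem sum_smul_sub_smul_sum_eq {ι E : Type*} [Fintype ι] [AddCommGroup E] [Module ℝ E]
    {w : ι → ℝ} (hw : ∑ j, w j = 1) (p : ι → ℝ) (z : ι → E) :
    ∑ j, (p j * w j) • z j - (∑ k, p k * w k) • ∑ j, w j • z j =
      ∑ j, ∑ k, (w j * w k * (p j - p k)) • z j := by
  simp only [mul_sub, sub_smul, sum_sub_distrib, smul_sum, smul_smul, ← sum_smul, ← mul_sum,
    ← sum_mul, hw]
  congr 1 <;> refine sum_congr rfl fun j _ => congrArg (· • z j) ?_
  · ring
  · rw [sum_mul]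
    exact sum_congr rfl fun k _ => by ring

theorem tendsto_sum_smul_sub_smul_sum {ι α E : Type*} [Fintype ι] [AddCommGroup E] [Module ℝ E]
    [TopologicalSpace E] [ContinuousAdd E] [ContinuousSMul ℝ E] {l : Filter α}
    {w : ι → ℝ} (hw : ∑ j, w j = 1) (z : ι → E) {p : α → ι → ℝ}
    (hp : ∀ j k, Tendsto (fun t => p t j - p t k) l (𝓝 0)) :
    Tendsto (fun t => ∑ j, (p t j * w j) • z j - (∑ k, p t k * w k) • ∑ j, w j • z j) l (𝓝 0) := by
  simp only [sum_smul_sub_smul_sum_eq hw]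
  simpa using tendsto_finsetSum _ fun j _ => tendsto_finsetSum _ fun k _ =>
    ((hp j k).const_mul (w j * w k)).smul_const (z j)

theorem tendsto_zero_of_tendsto_smul {α 𝕜 E : Type*} [NormedField 𝕜] [SeminormedAddCommGroup E]
    [NormedSpace 𝕜 E] {l : Filter α} {c : α → 𝕜} {v : α → E} {η : ℝ} (hη : 0 < η)
    (hc : ∀ᶠ t in l, η ≤ ‖c t‖) (h : Tendsto (fun t => c t • v t) l (𝓝 0)) :
    Tendsto v l (𝓝 0) := by
  refine squeeze_zero_norm' (hc.mono fun t ht => ?_) (by simpa using h.norm.div_const η)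
  rw [norm_smul, le_div_iff₀ hη, mul_comm]
  exact mul_le_mul_of_nonneg_right ht (norm_nonneg _)

theorem Matrix.le_mulVec_apply {n : Type*} [Fintype n] {P : Matrix n n ℝ} {η : ℝ}
    (hη : ∀ i j, η ≤ P i j) {v : n → ℝ} (hv : ∀ j, 0 ≤ v j) (hv1 : ∑ j, v j = 1) (i : n) :
    η ≤ (P *ᵥ v) i :=
  calc η = ∑ j, η * v j := by rw [← mul_sum, hv1, mul_one]
    _ ≤ ∑ j, P i j * v j := sum_le_sum fun j _ => mul_le_mul_of_nonneg_right (hη i j) (hv j)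

namespace Matrix

variable {n : Type*} [Fintype n] [DecidableEq n]

theorem sum_abs_mulVec_le {P : Matrix n n ℝ} (hP : P ∈ colStochastic ℝ n) {η : ℝ}
    (hη : ∀ i j, η ≤ P i j) {u : n → ℝ} (hu : ∑ j, u j = 0) :
    ∑ i, |(P *ᵥ u) i| ≤ (1 - Fintype.card n * η) * ∑ i, |u i| := by
  -- as `∑ u = 0`, subtracting `η` from every entry does not change `P *ᵥ u`, and it leaves
  -- nonnegative column sums `1 - card n * η`
  have hshift : ∀ i, (P *ᵥ u) i = ∑ j, (P i j - η) * u j := by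
    simp [mulVec, dotProduct, sub_mul, sum_sub_distrib, ← mul_sum, hu]
  calc ∑ i, |(P *ᵥ u) i| ≤ ∑ i, ∑ j, (P i j - η) * |u j| := by
        refine sum_le_sum fun i _ => hshift i ▸ (abs_sum_le_sum_abs _ _).trans_eq ?_
        simp only [abs_mul, abs_of_nonneg (sub_nonneg.2 (hη _ _))]
    _ = (1 - Fintype.card n * η) * ∑ i, |u i| := by
        simp [sum_comm (γ := n), ← sum_mul, sum_sub_distrib, sum_col_of_mem_colStochastic hP,
          mul_sum]

theorem sum_abs_mul_apply_sub_le {Q P : Matrix n n ℝ} (hQ : Q ∈ colStochastic ℝ n) {η : ℝ}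
    (hη : ∀ i j, η ≤ Q i j) (hP : P ∈ colStochastic ℝ n) (j k : n) :
    ∑ i, |(Q * P) i j - (Q * P) i k| ≤ (1 - Fintype.card n * η) * ∑ i, |P i j - P i k| := by
  have hu : ∑ m, (P m j - P m k) = 0 := by
    simp [sum_sub_distrib, sum_col_of_mem_colStochastic hP]
  convert sum_abs_mulVec_le hQ hη hu using 3 with i
  simp [mul_apply, mulVec, dotProduct, mul_sub, sum_sub_distrib]

theorem sum_abs_apply_sub_le_two {P : Matrix n n ℝ} (hP : P ∈ colStochastic ℝ n) (j k : n) :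
    ∑ i, |P i j - P i k| ≤ 2 := by
  calc ∑ i, |P i j - P i k| ≤ ∑ i, (P i j + P i k) :=
        sum_le_sum fun i _ => (abs_sub _ _).trans_eq <| by
          rw [abs_of_nonneg (hP.1 i j), abs_of_nonneg (hP.1 i k)]
    _ = 2 := by simp [sum_add_distrib, sum_col_of_mem_colStochastic hP]; norm_num

theorem apply_mul_apply_le_mul_apply {M P : Matrix n n ℝ} (hM : M ∈ colStochastic ℝ n)
    (hP : P ∈ colStochastic ℝ n) (i m j : n) : M i m * P m j ≤ (M * P) i j :=
  single_le_sum (f := fun m => M i m * P m j) (fun _ _ => mul_nonneg (hM.1 _ _) (hP.1 _ _))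
    (mem_univ m)

theorem card_mul_le_one_of_le_apply [Nonempty n] {P : Matrix n n ℝ} (hP : P ∈ colStochastic ℝ n)
    {η : ℝ} (hη : ∀ i j, η ≤ P i j) : Fintype.card n * η ≤ 1 := by
  obtain ⟨j⟩ := ‹Nonempty n›
  simpa [sum_col_of_mem_colStochastic hP] using sum_le_sum fun i (_ : i ∈ univ) => hη i j

end Matrix

namespace PushSum

variable {n : Type*} [Fintype n] [DecidableEq n]

/-- `transition A s k = A (s + k - 1) * ⋯ * A (s + 1) * A s`. -/
def transition {R : Type*} [Semiring R] (A : ℕ → Matrix n n R) (s : ℕ) : ℕ → Matrix n n R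
  | 0 => 1
  | k + 1 => A (s + k) * transition A s k

section Semiring

variable {R : Type*} [Semiring R] (A : ℕ → Matrix n n R)

theorem transition_add (s k l : ℕ) :
    transition A s (k + l) = transition A (s + k) l * transition A s k := by
  induction l with
  | zero => simp [transition]
  | succ l ih => rw [← add_assoc, transition, ih, transition, add_assoc, Matrix.mul_assoc]

theorem eq_sum_transition_smul {M : Type*} [AddCommMonoid M] [Module R M] {y : ℕ → n → M}
    (hy : ∀ t i, y (t + 1) i = ∑ j, A t i j • y t j) (s k : ℕ) (i : n) :
    y (s + k) i = ∑ j, transition A s k i j • y s j := by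
  induction k generalizing i with
  | zero => simp [transition, one_apply, ite_smul]
  | succ k ih =>
    simp only [← add_assoc, hy, ih, transition, mul_apply, smul_sum, sum_smul, mul_smul]
    exact sum_comm

end Semiring

variable {A : ℕ → Matrix n n ℝ}

theorem transition_mem_colStochastic (hA : ∀ t, A t ∈ colStochastic ℝ n) (s k : ℕ) :
    transition A s k ∈ colStochastic ℝ n := by
  induction k with
  | zero => exact (colStochastic ℝ n).one_mem
  | succ k ih => exact (colStochastic ℝ n).mul_mem (hA _) ih

theorem transition_succ_apply_pos (hA : ∀ t, A t ∈ colStochastic ℝ n) {s k : ℕ} {u v j : n}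
    (hvu : 0 < A (s + k) v u) (huj : 0 < transition A s k u j) :
    0 < transition A s (k + 1) v j :=
  (mul_pos hvu huj).trans_le <|
    apply_mul_apply_le_mul_apply (hA _) (transition_mem_colStochastic hA s k) v u j

theorem transition_apply_pos_of_le (hA : ∀ t, A t ∈ colStochastic ℝ n)
    (hdiag : ∀ t i, 0 < A t i i) {s k l : ℕ} {i j : n} (hkl : k ≤ l)
    (h : 0 < transition A s k i j) : 0 < transition A s l i j := by
  induction l, hkl using Nat.le_induction with
  | base => exact h
  | succ l _ ih => exact transition_succ_apply_pos hA (hdiag _ i) ih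

theorem pow_le_transition_apply (hA : ∀ t, A t ∈ colStochastic ℝ n) {θ : ℝ} (hθ : 0 ≤ θ)
    (hθA : ∀ t i j, A t i j ≠ 0 → θ ≤ A t i j) {s k : ℕ} {i j : n}
    (h : 0 < transition A s k i j) : θ ^ k ≤ transition A s k i j := by
  induction k generalizing i j with
  | zero =>
    rcases eq_or_ne i j with rfl | hij
    · simp [transition]
    · simp [transition, one_apply, hij] at h
  | succ k ih =>
    have hP := transition_mem_colStochastic hA s k
    obtain ⟨m, -, hm⟩ := exists_lt_of_sum_lt (s := univ) (f := fun _ => (0 : ℝ))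
      (by simpa [transition, mul_apply] using h)
    have him : 0 < A (s + k) i m := pos_of_mul_pos_left hm (hP.1 _ _)
    have hmj : 0 < transition A s k m j := pos_of_mul_pos_right hm ((hA _).1 _ _)
    calc θ ^ (k + 1) = θ * θ ^ k := pow_succ' θ k
      _ ≤ A (s + k) i m * transition A s k m j :=
        mul_le_mul (hθA _ _ _ him.ne') (ih hmj) (pow_nonneg hθ k) him.le
      _ ≤ transition A s (k + 1) i j := apply_mul_apply_le_mul_apply (hA _) hP i m j

/-- Over each window of `T` steps the set of nodes reached from `j` grows, as long as it is not
everything, so after `card n` windows every node has been reached. -/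
theorem transition_apply_pos_of_connected (hA : ∀ t, A t ∈ colStochastic ℝ n)
    (hdiag : ∀ t i, 0 < A t i i) {T : ℕ}
    (hconn : ∀ t i j, Relation.ReflTransGen (fun u v => ∃ s < T, 0 < A (t + s) v u) i j)
    (t : ℕ) (i j : n) : 0 < transition A t (Fintype.card n * T) i j := by
  let S : ℕ → Finset n := fun k => {v | 0 < transition A t (k * T) v j}
  have hmono : ∀ k, S k ⊆ S (k + 1) := fun k v hv => by
    simp only [S, mem_filter, mem_univ, true_and] at hv ⊢
    exact transition_apply_pos_of_le hA hdiag (Nat.mul_le_mul_right T k.le_succ) hv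
  have hgrow : ∀ k, S k ≠ univ → S k ⊂ S (k + 1) := by
    intro k hk
    obtain ⟨i', hi'⟩ : ∃ i', i' ∉ S k := by simpa [eq_univ_iff_forall] using hk
    have hj : j ∈ S k := by
      simpa [S] using transition_apply_pos_of_le hA hdiag (Nat.zero_le _)
        (show 0 < transition A t 0 j j by simp [transition])
    obtain ⟨u, hu, v, hv, r, hr, hvu⟩ :=
      (hconn (t + k * T) j i').exists_rel_of_mem_of_notMem (S := ↑(S k)) hj hi'
    refine (ssubset_iff_of_subset (hmono k)).2 ⟨v, ?_, hv⟩
    simp only [S, coe_filter, mem_filter, mem_univ, true_and, Set.mem_ofPred_eq] at hu ⊢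
    have hstep := transition_succ_apply_pos hA (k := k * T + r) (by rwa [← add_assoc])
      (transition_apply_pos_of_le hA hdiag (Nat.le_add_right _ r) hu)
    exact transition_apply_pos_of_le hA hdiag (l := (k + 1) * T) (by rw [add_mul]; omega) hstep
  simpa [S] using Finset.ext_iff.1 (eq_univ_of_ssubset_succ S hmono hgrow) i

theorem sum_abs_transition_apply_sub_le (hA : ∀ t, A t ∈ colStochastic ℝ n) {B : ℕ} {η : ℝ}
    (hentries : ∀ s i j, η ≤ transition A s B i j) (s q r : ℕ) (j k : n) :
    ∑ i, |transition A s (q * B + r) i j - transition A s (q * B + r) i k| ≤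
      2 * (1 - Fintype.card n * η) ^ q := by
  have : Nonempty n := ⟨j⟩
  have hcη := card_mul_le_one_of_le_apply (transition_mem_colStochastic hA 0 B) (hentries 0)
  induction q with
  | zero => simpa using sum_abs_apply_sub_le_two (transition_mem_colStochastic hA s r) j k
  | succ q ih =>
    rw [show (q + 1) * B + r = (q * B + r) + B by ring, transition_add]
    calc _ ≤ (1 - Fintype.card n * η) * ∑ i, |transition A s (q * B + r) i j -
            transition A s (q * B + r) i k| :=
          sum_abs_mul_apply_sub_le (transition_mem_colStochastic hA _ _) (hentries _)
            (transition_mem_colStochastic hA _ _) j k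
      _ ≤ (1 - Fintype.card n * η) * (2 * (1 - Fintype.card n * η) ^ q) :=
          mul_le_mul_of_nonneg_left ih (sub_nonneg.2 hcη)
      _ = 2 * (1 - Fintype.card n * η) ^ (q + 1) := by ring

theorem tendsto_transition_apply_sub (hA : ∀ t, A t ∈ colStochastic ℝ n) {B : ℕ} (hB : 0 < B)
    {η : ℝ} (hη : 0 < η) (hentries : ∀ s i j, η ≤ transition A s B i j) (s : ℕ) (i j k : n) :
    Tendsto (fun t => transition A s t i j - transition A s t i k) atTop (𝓝 0) := by
  have : Nonempty n := ⟨j⟩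
  have hcη := card_mul_le_one_of_le_apply (transition_mem_colStochastic hA 0 B) (hentries 0)
  have hcη_pos : 0 < Fintype.card n * η := mul_pos (by exact_mod_cast Fintype.card_pos) hη
  have hlim : Tendsto (fun t => 2 * (1 - Fintype.card n * η) ^ (t / B)) atTop (𝓝 0) := by
    simpa using ((tendsto_pow_atTop_nhds_zero_of_lt_one (r := 1 - Fintype.card n * η)
      (by linarith) (by linarith)).comp (Nat.tendsto_div_const_atTop hB.ne')).const_mul 2
  refine squeeze_zero_norm (fun t => ?_) hlim
  calc ‖transition A s t i j - transition A s t i k‖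
      ≤ ∑ i', |transition A s t i' j - transition A s t i' k| :=
        single_le_sum (f := fun i' => |transition A s t i' j - transition A s t i' k|)
          (fun _ _ => abs_nonneg _) (mem_univ i)
    _ ≤ 2 * (1 - Fintype.card n * η) ^ (t / B) := by
        simpa only [Nat.div_add_mod'] using
          sum_abs_transition_apply_sub_le hA hentries s (t / B) (t % B) j k

theorem smul_eq_sum_transition_smul {E : Type*} [AddCommGroup E] [Module ℝ E] {φ : ℕ → n → ℝ}
    {x : ℕ → n → E} (hφ : ∀ t i, φ t i ≠ 0)
    (hx : ∀ t i, x (t + 1) i = (1 / φ (t + 1) i) • ∑ j, (A t i j * φ t j) • x t j) (t : ℕ) (i : n) :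
    φ t i • x t i = ∑ j, (transition A 0 t i j * φ 0 j) • x 0 j := by
  simpa [mul_smul] using eq_sum_transition_smul A (y := fun t i => φ t i • x t i) (fun t i => by
    rw [hx, smul_smul, mul_one_div_cancel (hφ _ _), one_smul]; simp [mul_smul]) 0 t i

end PushSum

open PushSum

theorem push_sum_consensus_general
    (N d : ℕ) (hN : 0 < N)
    (A : ℕ → Matrix (Fin N) (Fin N) ℝ)
    -- each `A^t` is column stochastic
    (hnonneg : ∀ t i j, 0 ≤ A t i j)
    (hcol : ∀ t j, ∑ i, A t i j = 1)
    -- every nonzero entry is at least `θ ∈ (0,1)`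
    (θ : ℝ) (hθ : θ ∈ Set.Ioo (0:ℝ) 1)
    (hθA : ∀ t i j, A t i j ≠ 0 → θ ≤ A t i j)
    -- positive diagonal entries
    (hdiag : ∀ t i, 0 < A t i i)
    -- `T`-strong connectivity of the induced digraphs (edge `(j,i)` iff `(A^t)_{ij} > 0`)
    (T : ℕ) (hT : 0 < T)
    (hTconn : ∀ t : ℕ, ∀ i j : Fin N,
      Relation.ReflTransGen (fun u v : Fin N => ∃ s < T, 0 < A (t + s) v u) i j)
    -- weights and states
    (φ : ℕ → Fin N → ℝ) (x : ℕ → Fin N → EuclideanSpace ℝ (Fin d))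
    (hφ0sum : ∑ i, φ 0 i = 1)
    -- push-sum recursion
    (hφ : ∀ t i, φ (t + 1) i = ∑ j, A t i j * φ t j)
    (hφpos : ∀ t i, 0 < φ t i)
    (hx : ∀ t i, x (t + 1) i = (1 / φ (t + 1) i) • ∑ j, (A t i j * φ t j) • x t j) :
    ∀ i, Filter.Tendsto (fun t => ‖x t i - ∑ k, φ 0 k • x 0 k‖)
      Filter.atTop (nhds 0) := by
  have hA : ∀ t, A t ∈ colStochastic ℝ (Fin N) := fun t =>
    mem_colStochastic_iff_sum.2 ⟨hnonneg t, hcol t⟩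
  have hentries : ∀ s i j, θ ^ (N * T) ≤ transition A s (N * T) i j := fun s i j =>
    pow_le_transition_apply hA hθ.1.le hθA
      (by simpa using transition_apply_pos_of_connected hA hdiag hTconn s i j)
  have hφrep : ∀ s t, φ (s + t) = transition A s t *ᵥ φ s := fun s t => funext <|
    eq_sum_transition_smul A (by simpa only [smul_eq_mul] using hφ) s t
  have hmass : ∀ t, ∑ i, φ t i = 1 := fun t => by
    rw [← zero_add t, hφrep, sum_mulVec_of_mem_colStochastic (transition_mem_colStochastic hA 0 t),
      hφ0sum]
  intro i
  have hlow : ∀ᶠ t in atTop, θ ^ (N * T) ≤ ‖φ t i‖ := by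
    filter_upwards [eventually_ge_atTop (N * T)] with t ht
    obtain ⟨s, rfl⟩ := Nat.exists_eq_add_of_le' ht
    exact (hφrep s (N * T) ▸ le_mulVec_apply (hentries s) (fun j => (hφpos s j).le) (hmass s) i)
      |>.trans (Real.le_norm_self _)
  have hdev := tendsto_sum_smul_sub_smul_sum hφ0sum (x 0) (p := fun t j => transition A 0 t i j)
    fun j k => tendsto_transition_apply_sub hA (Nat.mul_pos hN hT) (pow_pos hθ.1 _) hentries 0 i j k
  refine tendsto_zero_iff_norm_tendsto_zero.1 <|
    tendsto_zero_of_tendsto_smul (pow_pos hθ.1 _) hlow ?_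
  convert hdev using 2 with t
  rw [smul_sub, smul_eq_sum_transition_smul (fun t i => (hφpos t i).ne') hx,
    show φ t i = (transition A 0 t *ᵥ φ 0) i by simpa using congrFun (hφrep 0 t) i]
  rfl

/-- Push-sum consensus. Let `{A^t}` be column stochastic matrices with
nonzero entries at least `θ ∈ (0,1)`, positive diagonal entries, whose induced digraphs
are `T`-strongly connected. Let `φ^0 > 0` with `∑_i φ_i^0 = 1`, `x_i^0 ∈ ℝ^d`, and run the
push-sum recursion `φ^{t+1} = A^t φ^t`,
`x_i^{t+1} = (1/φ_i^{t+1}) ∑_j (A^t)_{ij} φ_j^t x_j^t`. Then every node's state `x_i^t`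
converges to the weighted average `∑_k φ_k^0 x_k^0`. -/
theorem push_sum_consensus
    (N d : ℕ) (hN : 0 < N)
    (A : ℕ → Matrix (Fin N) (Fin N) ℝ)
    -- each `A^t` is column stochastic
    (hnonneg : ∀ t i j, 0 ≤ A t i j)
    (hcol : ∀ t j, ∑ i, A t i j = 1)
    -- every nonzero entry is at least `θ ∈ (0,1)`
    (θ : ℝ) (hθ : θ ∈ Set.Ioo (0:ℝ) 1)
    (hθA : ∀ t i j, A t i j ≠ 0 → θ ≤ A t i j)
    -- positive diagonal entries
    (hdiag : ∀ t i, 0 < A t i i)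
    -- `T`-strong connectivity of the induced digraphs (edge `(j,i)` iff `(A^t)_{ij} > 0`)
    (T : ℕ) (hT : 0 < T)
    (hTconn : ∀ t : ℕ, ∀ i j : Fin N,
      Relation.ReflTransGen (fun u v : Fin N => ∃ s < T, 0 < A (t + s) v u) i j)
    -- weights and states
    (φ : ℕ → Fin N → ℝ) (x : ℕ → Fin N → EuclideanSpace ℝ (Fin d))
    (hφ0pos : ∀ i, 0 < φ 0 i) (hφ0sum : ∑ i, φ 0 i = 1)
    -- push-sum recursion
    (hφ : ∀ t i, φ (t + 1) i = ∑ j, A t i j * φ t j)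
    (hφpos : ∀ t i, 0 < φ t i)
    (hx : ∀ t i, x (t + 1) i = (1 / φ (t + 1) i) • ∑ j, (A t i j * φ t j) • x t j) :
    ∀ i, Filter.Tendsto (fun t => ‖x t i - ∑ k, φ 0 k • x 0 k‖)
      Filter.atTop (nhds 0) :=
  push_sum_consensus_general N d hN A hnonneg hcol θ hθ hθA hdiag T hT hTconn φ x hφ0sum hφ hφpos hx
end

section
/- Let θ > 0 and set η(θ) = θ / log(1+θ). Then the function g₀⁻ : ℝ → ℝ defined by g₀⁻(x) = η(θ)|x| − log(1 + θ|x|)/log(1+θ) is convex on ℝ. -/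
/-!
Writing `φ(u) = u - log (1 + u)`, one has `g₀⁻(x) = φ(θ|x|) / log (1 + θ)`. On `[0, ∞)` the
function `φ` is convex (linear minus concave) and nondecreasing (`log (1 + u)` grows at rate at
most `1`), and a convex function that is nondecreasing on `[0, ∞)` stays convex when composed
with `|·|`.
-/

open Set Real

theorem ConvexOn.comp_abs {f : ℝ → ℝ} (hf : ConvexOn ℝ (Ici 0) f)
    (hf_mono : MonotoneOn f (Ici 0)) : ConvexOn ℝ univ fun x => f |x| := by
  have himage : (fun x : ℝ => |x|) '' univ = Ici 0 := by
    ext y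
    exact ⟨by rintro ⟨x, -, rfl⟩; exact abs_nonneg x, fun hy => ⟨y, trivial, abs_of_nonneg hy⟩⟩
  exact (himage ▸ hf).comp convexOn_univ_norm (himage ▸ hf_mono)

theorem concaveOn_log_one_add : ConcaveOn ℝ (Ioi (-1)) fun u => log (1 + u) := by
  have hpreimage : (fun z : ℝ => 1 + z) ⁻¹' Ioi 0 = Ioi (-1) := by
    ext z
    simp only [mem_preimage, mem_Ioi]
    constructor <;> intro <;> linarith
  exact hpreimage ▸ strictConcaveOn_log_Ioi.concaveOn.translate_right 1

theorem convexOn_sub_log_one_add : ConvexOn ℝ (Ioi (-1)) fun u => u - log (1 + u) :=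
  (convexOn_id (convex_Ioi _)).sub concaveOn_log_one_add

theorem monotoneOn_sub_log_one_add : MonotoneOn (fun u : ℝ => u - log (1 + u)) (Ici 0) := by
  intro a (ha : 0 ≤ a) b _ hab
  have ha' : 0 < 1 + a := by linarith
  have hgrowth : 1 + b ≤ (1 + a) * exp (b - a) := by
    have := mul_le_mul_of_nonneg_left (add_one_le_exp (b - a)) ha'.le
    nlinarith [mul_nonneg ha (sub_nonneg.2 hab)]
  have hlog := log_le_log (by linarith) hgrowth
  rw [log_mul ha'.ne' (exp_pos _).ne', log_exp] at hlog
  simp only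
  linarith

theorem convexOn_abs_sub_log_one_add_abs :
    ConvexOn ℝ univ fun x : ℝ => |x| - log (1 + |x|) :=
  (convexOn_sub_log_one_add.subset (Ici_subset_Ioi.2 (by norm_num)) (convex_Ici 0)).comp_abs
    monotoneOn_sub_log_one_add

/-- For `θ > 0` and `η(θ) = θ / log(1+θ)`, the function
`g₀⁻(x) = η(θ)|x| − log(1 + θ|x|)/log(1+θ)` is convex on `ℝ`. -/
theorem dc_decomposition_concave_part_convex
    (θ : ℝ) (hθ : 0 < θ) :
    ConvexOn ℝ Set.univ
      (fun x : ℝ => (θ / Real.log (1 + θ)) * |x|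
        - Real.log (1 + θ * |x|) / Real.log (1 + θ)) := by
  have hlog : 0 < log (1 + θ) := log_pos (by linarith)
  have hscaled := (convexOn_abs_sub_log_one_add_abs.comp_linearMap (θ • LinearMap.id)).smul
    (inv_nonneg.2 hlog.le)
  rw [preimage_univ] at hscaled
  refine hscaled.congr fun x _ => ?_
  simp only [Function.comp_apply, LinearMap.smul_apply, LinearMap.id_apply, smul_eq_mul, abs_mul,
    abs_of_pos hθ]
  field_simp
end

section
/- Let θ > 0 and set η(θ) = θ / log(1+θ). The function g₀⁻ : ℝ → ℝ defined by g₀⁻(x) = η(θ)|x| − log(1 + θ|x|)/log(1+θ) is differentiable at every x ∈ ℝ, with derivative (g₀⁻)'(x) = sign(x) · θ²|x| / (log(1+θ)(1 + θ|x|)) (in particular (g₀⁻)'(0) = 0), and this derivative is Lipschitz continuous on ℝ with Lipschitz constant θ²/log(1+θ). -/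
/-! After the substitution `t = θ x` and up to the factor `1 / log (1 + θ)`, the function is
`k t = |t| - log (1 + |t|)`. Off the kink `k' t = t / (1 + |t|)`, which tends to `0` at the origin,
so `k` is differentiable there too. Hence the derivative is `x ↦ θ / log (1 + θ) · ψ (θ x)` with
`ψ t = t / (1 + |t|)`, and `ψ` is `1`-Lipschitz. -/

open Real

lemma Real.sign_mul_abs (x : ℝ) : Real.sign x * |x| = x := by
  rcases lt_trichotomy x 0 with hx | rfl | hx
  · rw [Real.sign_of_neg hx, abs_of_neg hx, neg_one_mul, neg_neg]
  · rw [abs_zero, mul_zero]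
  · rw [Real.sign_of_pos hx, abs_of_pos hx, one_mul]

lemma hasDerivAt_abs_sub_log_one_add_abs (x : ℝ) :
    HasDerivAt (fun y ↦ |y| - log (1 + |y|)) (x / (1 + |x|)) x := by
  have hpos : ∀ y : ℝ, 0 < 1 + |y| := fun y ↦ by positivity
  refine hasDerivAt_of_hasDerivAt_of_ne' (f := fun y ↦ |y| - log (1 + |y|))
    (g := fun y ↦ y / (1 + |y|)) (x := 0) (fun y hy ↦ ?_) ?_ ?_ x
  · have habs := hasDerivAt_abs hy
    refine (habs.sub ((habs.const_add 1).log (hpos y).ne')).congr_deriv ?_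
    rw [sub_eq_iff_eq_add, ← add_div, eq_div_iff (hpos y).ne', mul_add, mul_one,
      _root_.sign_mul_abs, add_comm]
  · exact (continuous_abs.sub
      ((continuous_const.add continuous_abs).log fun y ↦ (hpos y).ne')).continuousAt
  · exact (continuous_id.div (continuous_const.add continuous_abs)
      fun y ↦ (hpos y).ne').continuousAt

lemma abs_mul_abs_sub_mul_abs_le (a b : ℝ) : |a * |b| - |a| * b| ≤ 2 * |a| * |a - b| :=
  calc |a * |b| - |a| * b| = |a * (|b| - |a|) + |a| * (a - b)| := by ring_nf
    _ ≤ |a| * |a - b| + |a| * |a - b| := by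
      grw [abs_add_le, abs_mul, abs_mul, abs_abs, abs_sub_comm a b, abs_abs_sub_abs_le_abs_sub]
    _ = 2 * |a| * |a - b| := by ring

lemma abs_div_one_add_abs_sub_div_one_add_abs_le (a b : ℝ) :
    |a / (1 + |a|) - b / (1 + |b|)| ≤ |a - b| := by
  have ha : 0 < 1 + |a| := by positivity
  have hb : 0 < 1 + |b| := by positivity
  have hcross : |a * |b| - |a| * b| ≤ (|a| + |b|) * |a - b| := by
    have hswap : |a * |b| - |a| * b| = |b * |a| - |b| * a| := by rw [abs_sub_comm]; ring_nf
    have := abs_mul_abs_sub_mul_abs_le b a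
    rw [abs_sub_comm b a] at this
    linarith [abs_mul_abs_sub_mul_abs_le a b]
  rw [div_sub_div _ _ ha.ne' hb.ne', abs_div, abs_of_pos (mul_pos ha hb),
    div_le_iff₀ (mul_pos ha hb)]
  calc |a * (1 + |b|) - (1 + |a|) * b| = |(a - b) + (a * |b| - |a| * b)| := by ring_nf
    _ ≤ |a - b| + (|a| + |b|) * |a - b| := (abs_add_le _ _).trans (by gcongr)
    _ ≤ |a - b| * ((1 + |a|) * (1 + |b|)) := by
      nlinarith [mul_nonneg (mul_nonneg (abs_nonneg a) (abs_nonneg b)) (abs_nonneg (a - b))]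

/-- For `θ > 0` and `η(θ) = θ / log(1+θ)`, the function
`g₀⁻(x) = η(θ)|x| − log(1 + θ|x|)/log(1+θ)` is differentiable everywhere, with derivative
`(g₀⁻)'(x) = sign(x) · θ²|x| / (log(1+θ)(1 + θ|x|))` (so `(g₀⁻)'(0) = 0`), and this
derivative is Lipschitz on `ℝ` with constant `θ²/log(1+θ)`. -/
theorem dc_decomposition_concave_part_derivative
    (θ : ℝ) (hθ : 0 < θ)
    (g : ℝ → ℝ)
    (hg : ∀ x, g x = (θ / Real.log (1 + θ)) * |x|
      - Real.log (1 + θ * |x|) / Real.log (1 + θ))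
    (g' : ℝ → ℝ)
    (hg' : ∀ x, g' x = Real.sign x * (θ ^ 2 * |x| / (Real.log (1 + θ) * (1 + θ * |x|)))) :
    (∀ x, HasDerivAt g (g' x) x) ∧
    (g' 0 = 0) ∧
    (∀ a b, |g' a - g' b| ≤ (θ ^ 2 / Real.log (1 + θ)) * |a - b|) := by
  set L := log (1 + θ)
  have hL : 0 < L := log_pos (by linarith)
  have habs (x : ℝ) : |θ * x| = θ * |x| := by rw [abs_mul, abs_of_pos hθ]
  have hg_eq : g = fun x ↦ (|θ * x| - log (1 + |θ * x|)) / L := by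
    ext x
    rw [hg, habs]
    ring
  have hg'_eq (x : ℝ) : g' x = θ / L * (θ * x / (1 + |θ * x|)) := by
    rw [hg', habs]
    calc _ = θ / L * (θ * (Real.sign x * |x|) / (1 + θ * |x|)) := by field_simp
      _ = _ := by rw [Real.sign_mul_abs]
  refine ⟨fun x ↦ ?_, by simp [hg'_eq], fun a b ↦ ?_⟩
  · rw [hg_eq, hg'_eq]
    exact (((hasDerivAt_abs_sub_log_one_add_abs (θ * x)).comp x
      ((hasDerivAt_id x).const_mul θ)).div_const L).congr_deriv (by ring)
  · calc |g' a - g' b| = θ / L * |θ * a / (1 + |θ * a|) - θ * b / (1 + |θ * b|)| := by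
          rw [hg'_eq, hg'_eq, ← mul_sub, abs_mul, abs_of_pos (by positivity)]
      _ ≤ θ / L * |θ * a - θ * b| :=
          mul_le_mul_of_nonneg_left (abs_div_one_add_abs_sub_div_one_add_abs_le _ _)
            (by positivity)
      _ = θ ^ 2 / L * |a - b| := by
          rw [← mul_sub, habs]
          ring
end

section
/- Let F : ℝ^m → ℝ be differentiable, λ ≥ 0, and let K = [k_L, k_U]^m ⊆ ℝ^m be a box with k_L ≤ k_U. For x* ∈ K the following are equivalent: (i) for all y ∈ K, ⟨∇F(x*), y − x*⟩ + λ(‖y‖₁ − ‖x*‖₁) ≥ 0; (ii) x* = P_K(S_λ(x* − ∇F(x*))), where S_λ acts componentwise by S_λ(u)_j = sign(u_j)·max(|u_j| − λ, 0) and P_K is the componentwise projection (clamp) onto [k_L, k_U]. -/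
open scoped RealInnerProductSpace

/-!
The problem separates over the coordinates, so it suffices to treat one coordinate `x ∈ [a, b]`.
With `u = x - g`, `s = S_λ(u)` and `p = clamp s`, the number `c = u - s` is a subgradient of
`λ|·|` at `s`, and `p` lies between `s` and any `t ∈ [a, b]`; monotonicity of the chord slopes of
`λ|·|` then gives the variational inequality `(u - p)(t - p) ≤ λ(|t| - |p|)` on `[a, b]`,
i.e. `p` minimises `½(t - u)² + λ|t|` there. Adding this inequality at `t = x` to the
stationarity condition at `t = p` yields `(x - p)² ≤ 0`.
-/

noncomputable def softThreshold (lam u : ℝ) : ℝ :=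
  Real.sign u * max (|u| - lam) 0

theorem abs_sub_softThreshold_le {lam : ℝ} (hlam : 0 ≤ lam) (u : ℝ) :
    |u - softThreshold lam u| ≤ lam := by
  unfold softThreshold
  rcases lt_trichotomy u 0 with hu | rfl | hu
  · rw [Real.sign_of_neg hu, abs_of_neg hu, abs_le]
    constructor <;> cases max_cases (-u - lam) 0 <;> linarith
  · simpa using hlam
  · rw [Real.sign_of_pos hu, abs_of_pos hu, abs_le]
    constructor <;> cases max_cases (u - lam) 0 <;> linarith

theorem sub_softThreshold_mul_self (lam u : ℝ) :
    (u - softThreshold lam u) * softThreshold lam u = lam * |softThreshold lam u| := by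
  unfold softThreshold
  rcases lt_trichotomy u 0 with hu | rfl | hu
  · rw [Real.sign_of_neg hu, abs_of_neg hu]
    rcases max_cases (-u - lam) 0 with ⟨h, _⟩ | ⟨h, _⟩ <;> rw [h]
    · rw [abs_of_nonpos (by linarith)]; ring
    · simp
  · simp
  · rw [Real.sign_of_pos hu, abs_of_pos hu]
    rcases max_cases (u - lam) 0 with ⟨h, _⟩ | ⟨h, _⟩ <;> rw [h]
    · rw [abs_of_nonneg (by linarith)]; ring
    · simp

section Subgradient

variable {lam c s : ℝ}

/-- The hypotheses `hc` and `hcs` say that `c` is a subgradient of `lam * |·|` at `s`. -/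
theorem mul_sub_le_of_subgradient_of_le (hc : |c| ≤ lam) (hcs : c * s = lam * |s|)
    {p t : ℝ} (hsp : s ≤ p) (hpt : p ≤ t) : c * (t - p) ≤ lam * (|t| - |p|) := by
  rcases le_or_gt 0 p with hp | hp
  · rw [abs_of_nonneg hp, abs_of_nonneg (hp.trans hpt)]
    exact mul_le_mul_of_nonneg_right (le_of_abs_le hc) (sub_nonneg.mpr hpt)
  · have hs : s < 0 := hsp.trans_lt hp
    have hc' : c = -lam := by
      rw [abs_of_neg hs] at hcs
      exact mul_right_cancel₀ hs.ne (by linarith)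
    rw [hc', abs_of_neg hp]
    linarith [mul_nonneg ((abs_nonneg c).trans hc) (by linarith [neg_abs_le t] : 0 ≤ |t| + t)]

theorem mul_sub_le_of_subgradient (hc : |c| ≤ lam) (hcs : c * s = lam * |s|)
    {p t : ℝ} (hp : (s - p) * (t - p) ≤ 0) : c * (t - p) ≤ lam * (|t| - |p|) := by
  rcases mul_nonpos_iff.mp hp with ⟨hsp, htp⟩ | ⟨hsp, htp⟩
  · have := mul_sub_le_of_subgradient_of_le (lam := lam) (c := -c) (s := -s) (p := -p) (t := -t)
      (by rwa [abs_neg]) (by rwa [abs_neg, neg_mul_neg]) (by linarith) (by linarith)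
    rw [abs_neg, abs_neg] at this
    linarith
  · exact mul_sub_le_of_subgradient_of_le hc hcs (by linarith) (by linarith)

end Subgradient

theorem sub_min_max_mul_sub_nonpos {a b s t : ℝ} (ht : t ∈ Set.Icc a b) :
    (s - min b (max a s)) * (t - min b (max a s)) ≤ 0 := by
  obtain ⟨hat, htb⟩ := ht
  rcases le_total s a with hsa | has
  · rw [max_eq_left hsa, min_eq_right (hat.trans htb)]
    exact mul_nonpos_of_nonpos_of_nonneg (by linarith) (by linarith)
  rcases le_total s b with hsb | hbs
  · simp [max_eq_right has, min_eq_right hsb]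
  · rw [max_eq_right has, min_eq_left hbs]
    exact mul_nonpos_of_nonneg_of_nonpos (by linarith) (by linarith)

theorem min_max_softThreshold_variational {lam : ℝ} (hlam : 0 ≤ lam) (a b u : ℝ)
    {t : ℝ} (ht : t ∈ Set.Icc a b) :
    (u - min b (max a (softThreshold lam u))) * (t - min b (max a (softThreshold lam u)))
      ≤ lam * (|t| - |min b (max a (softThreshold lam u))|) := by
  set s := softThreshold lam u
  set p := min b (max a s)
  have hproj : (s - p) * (t - p) ≤ 0 := sub_min_max_mul_sub_nonpos ht
  calc (u - p) * (t - p) = (u - s) * (t - p) + (s - p) * (t - p) := by ring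
    _ ≤ (u - s) * (t - p) := by linarith
    _ ≤ lam * (|t| - |p|) := mul_sub_le_of_subgradient (abs_sub_softThreshold_le hlam u)
      (sub_softThreshold_mul_self lam u) hproj

theorem forall_mem_Icc_stationary_iff {lam : ℝ} (hlam : 0 ≤ lam) {a b x : ℝ}
    (hx : x ∈ Set.Icc a b) (g : ℝ) :
    (∀ t ∈ Set.Icc a b, 0 ≤ g * (t - x) + lam * (|t| - |x|)) ↔
      x = min b (max a (softThreshold lam (x - g))) := by
  have hvar := fun t (ht : t ∈ Set.Icc a b) =>
    min_max_softThreshold_variational hlam a b (x - g) ht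
  constructor
  · intro hstat
    have hp : min b (max a (softThreshold lam (x - g))) ∈ Set.Icc a b :=
      ⟨le_min (hx.1.trans hx.2) (le_max_left _ _), min_le_left _ _⟩
    nlinarith [hstat _ hp, hvar x hx]
  · intro hxp t ht
    have := hvar t ht
    rw [← hxp] at this
    linarith

theorem forall_mem_pi_sum_nonneg_iff {ι α M : Type*} [Fintype ι] [AddCommMonoid M]
    [PartialOrder M] [IsOrderedAddMonoid M] {S : ι → Set α} {f : ι → α → M} {x : ι → α}
    (hx : ∀ j, x j ∈ S j) (hf : ∀ j, f j (x j) = 0) :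
    (∀ y : ι → α, (∀ j, y j ∈ S j) → 0 ≤ ∑ j, f j (y j)) ↔ ∀ j, ∀ t ∈ S j, 0 ≤ f j t := by
  classical
  refine ⟨fun h j t ht => ?_, fun h y hy => Finset.sum_nonneg fun j _ => h j _ (hy j)⟩
  have hy : ∀ i, Function.update x j t i ∈ S i := by
    intro i
    rcases eq_or_ne i j with rfl | hij
    · simpa using ht
    · simpa [hij] using hx i
  have := h _ hy
  rwa [Finset.sum_eq_single j (fun i _ hij => by simp [hij, hf]) (by simp),
    Function.update_self] at this

theorem l1_stationarity_iff_prox_fixed_point_general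
    (m : ℕ) (F : EuclideanSpace ℝ (Fin m) → ℝ)
    (lam : ℝ) (hlam : 0 ≤ lam)
    (kL kU : ℝ)
    (K : Set (EuclideanSpace ℝ (Fin m)))
    (hK : K = {x : EuclideanSpace ℝ (Fin m) | ∀ j, x j ∈ Set.Icc kL kU})
    (xstar : EuclideanSpace ℝ (Fin m)) (hx : xstar ∈ K) :
    (∀ y ∈ K, 0 ≤ ⟪gradient F xstar, y - xstar⟫
        + lam * ((∑ j, |y j|) - ∑ j, |xstar j|)) ↔
    (∀ j, xstar j = min kU (max kL
      (Real.sign ((xstar - gradient F xstar) j)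
        * max (|(xstar - gradient F xstar) j| - lam) 0))) := by
  subst hK
  set g := gradient F xstar
  have hsum : ∀ y : EuclideanSpace ℝ (Fin m),
      ⟪g, y - xstar⟫ + lam * ((∑ j, |y j|) - ∑ j, |xstar j|)
        = ∑ j, (g j * (y j - xstar j) + lam * (|y j| - |xstar j|)) := by
    intro y
    simp only [PiLp.inner_apply, PiLp.sub_apply, RCLike.inner_apply, conj_trivial,
      Finset.sum_add_distrib, ← Finset.sum_sub_distrib, Finset.mul_sum, mul_comm]
  simp only [Set.mem_ofPred_eq, hsum]
  rw [(WithLp.equiv 2 (Fin m → ℝ)).forall_congr_left]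
  refine (forall_mem_pi_sum_nonneg_iff (f := fun j t => g j * (t - xstar j)
    + lam * (|t| - |xstar j|)) hx (by simp)).trans (forall_congr' fun j => ?_)
  exact forall_mem_Icc_stationary_iff hlam (hx j) (g j)

/-- For differentiable `F : ℝ^m → ℝ`, `λ ≥ 0` and the box
`K = [k_L, k_U]^m`, a point `x* ∈ K` satisfies the first-order stationarity condition
`⟪∇F(x*), y − x*⟫ + λ(‖y‖₁ − ‖x*‖₁) ≥ 0` for all `y ∈ K` if and only if
`x* = P_K(S_λ(x* − ∇F(x*)))`, where `S_λ` is the componentwise soft-thresholding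
`S_λ(u)_j = sign(u_j)·max(|u_j| − λ, 0)` and `P_K` is the componentwise clamp onto
`[k_L, k_U]`. -/
theorem l1_stationarity_iff_prox_fixed_point
    (m : ℕ) (F : EuclideanSpace ℝ (Fin m) → ℝ)
    (hF : Differentiable ℝ F)
    (lam : ℝ) (hlam : 0 ≤ lam)
    (kL kU : ℝ) (hk : kL ≤ kU)
    (K : Set (EuclideanSpace ℝ (Fin m)))
    (hK : K = {x : EuclideanSpace ℝ (Fin m) | ∀ j, x j ∈ Set.Icc kL kU})
    (xstar : EuclideanSpace ℝ (Fin m)) (hx : xstar ∈ K) :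
    (∀ y ∈ K, 0 ≤ ⟪gradient F xstar, y - xstar⟫
        + lam * ((∑ j, |y j|) - ∑ j, |xstar j|)) ↔
    (∀ j, xstar j = min kU (max kL
      (Real.sign ((xstar - gradient F xstar) j)
        * max (|(xstar - gradient F xstar) j| - lam) 0))) :=
  l1_stationarity_iff_prox_fixed_point_general m F lam hlam kL kU K hK xstar hx
end
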